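/- Let Ω ⊂ ℝⁿ be open and E ⊂ Ω a set of finite perimeter. Then E is outward minimizing in Ω (i.e., P(E) ≤ P(F) for all F with E ⊂ F ⊂ Ω) if and only if P(E ∩ G) ≤ P(G) for all sets of finite perimeter G ⊂ Ω. -/

import Mathlib

open MeasureTheory ENNReal Set Filter Bornology Topology

noncomputable section

abbrev Euc (n : ℕ) := EuclideanSpace ℝ (Fin n)

variable {n : ℕ}

/-- Divergence of a vector field on `ℝⁿ`. -/
def diverg (ξ : Euc n → Euc n) (x : Euc n) : ℝ :=
  ∑ i, fderiv ℝ ξ x (EuclideanSpace.single i 1) i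

/-- Admissible test vector fields: `C¹`, compactly supported, bounded by one. -/
def testVF (n : ℕ) : Set (Euc n → Euc n) :=
  {ξ | ContDiff ℝ 1 ξ ∧ HasCompactSupport ξ ∧ ∀ x, ‖ξ x‖ ≤ 1}

/-- De Giorgi perimeter of a set in `ℝⁿ`. -/
def perimeter (E : Set (Euc n)) : ℝ≥0∞ :=
  ⨆ ξ ∈ testVF n, ENNReal.ofReal (∫ x in E, diverg ξ x)

/-- Total variation of a function on `ℝⁿ`. -/
def totalVariation (u : Euc n → ℝ) : ℝ≥0∞ :=
  ⨆ ξ ∈ testVF n, ENNReal.ofReal (∫ x, u x * diverg ξ x)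

/-- `E` is outward minimizing in `Ω`. -/
def OutwardMinimizing (Ω E : Set (Euc n)) : Prop :=
  ∀ F : Set (Euc n), MeasurableSet F → E ⊆ F → F ⊆ Ω → perimeter E ≤ perimeter F

/-- Distance to the topological boundary of `F`. -/
def bdist (F : Set (Euc n)) (x : Euc n) : ℝ := Metric.infDist x (frontier F)

/-- Signed distance to the boundary of `F`: negative inside `F`, positive outside. -/
def sdist (F : Set (Euc n)) (x : Euc n) : ℝ :=
  haveI := Classical.dec (x ∈ F)
  if x ∈ F then -(bdist F x) else bdist F x

/-- The Almgren–Taylor–Wang functional `F_h(E, F) = P(E) + (1/h) ∫_{E Δ F} d_F`. -/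
def ATW (h : ℝ) (E F : Set (Euc n)) : ℝ≥0∞ :=
  perimeter E + ENNReal.ofReal (1 / h) * ∫⁻ x in symmDiff E F, ENNReal.ofReal (bdist F x)

/-!
Everything rests on submodularity, `P(E ∩ G) + P(E ∪ G) ≤ P(E) + P(G)`: for outward minimizing
`E` it combines with `P(E) ≤ P(E ∪ G)` to give `P(E ∩ G) ≤ P(G)`, while the converse is the case
`G = F ⊇ E`.

Submodularity is proved for the total variation of `[0, 1]`-valued functions,
`|D(fg)| + |D(f + g - fg)| ≤ |Df| + |Dg|`, which for indicators is the claim. For smooth `u, v`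
the Leibniz rule for the divergence gives, for test fields `ξ, η`,
`∫ uv div ξ + ∫ (u + v - uv) div η = ∫ u div (η + v (ξ - η)) + ∫ v div (η + u (ξ - η))`,
and the fields on the right are again test fields because `u` and `v` take values in `[0, 1]`.
The general case follows by mollification, which does not increase the total variation, and
dominated convergence.
-/

section Divergence

variable {ξ η : Euc n → Euc n} {x : Euc n}

lemma diverg_fun_add (hξ : DifferentiableAt ℝ ξ x) (hη : DifferentiableAt ℝ η x) :
    diverg (fun y => ξ y + η y) x = diverg ξ x + diverg η x := by
  simp [diverg, fderiv_fun_add hξ hη, Finset.sum_add_distrib]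

lemma diverg_fun_sub (hξ : DifferentiableAt ℝ ξ x) (hη : DifferentiableAt ℝ η x) :
    diverg (fun y => ξ y - η y) x = diverg ξ x - diverg η x := by
  simp [diverg, fderiv_fun_sub hξ hη, Finset.sum_sub_distrib]

lemma diverg_fun_smul {m : Euc n → ℝ} (hm : DifferentiableAt ℝ m x)
    (hξ : DifferentiableAt ℝ ξ x) :
    diverg (fun y => m y • ξ y) x = fderiv ℝ m x (ξ x) + m x * diverg ξ x := by
  conv_rhs => rw [← (EuclideanSpace.basisFun (Fin n) ℝ).sum_repr (ξ x)]
  simp [diverg, fderiv_fun_smul hm hξ, Finset.mul_sum, ← Finset.sum_add_distrib, mul_comm, add_comm]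

lemma diverg_comp_add_right (t : Euc n) :
    diverg (fun y => ξ (y + t)) x = diverg ξ (x + t) := by
  simp [diverg, fderiv_comp_add_right]

lemma diverg_eq_zero_of_notMem_tsupport (hx : x ∉ tsupport ξ) : diverg ξ x = 0 := by
  simp [diverg, fderiv_of_notMem_tsupport ℝ hx]

lemma continuous_diverg (hξ : ContDiff ℝ 1 ξ) : Continuous (diverg ξ) :=
  continuous_finsetSum _ fun i _ => (continuous_apply i).comp
    ((PiLp.continuous_ofLp 2 _).comp
      ((hξ.continuous_fderiv one_ne_zero).clm_apply continuous_const))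

lemma HasCompactSupport.diverg (hξ : HasCompactSupport ξ) : HasCompactSupport (diverg ξ) :=
  HasCompactSupport.intro hξ fun _ => diverg_eq_zero_of_notMem_tsupport

lemma integrable_diverg (hξ : ContDiff ℝ 1 ξ) (hξc : HasCompactSupport ξ) :
    Integrable (diverg ξ) :=
  (continuous_diverg hξ).integrable_of_hasCompactSupport hξc.diverg

lemma integrable_mul_diverg {u : Euc n → ℝ} (hu : Continuous u) (hξ : ContDiff ℝ 1 ξ)
    (hξc : HasCompactSupport ξ) : Integrable (fun x => u x * diverg ξ x) :=
  (hu.mul (continuous_diverg hξ)).integrable_of_hasCompactSupport hξc.diverg.mul_left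

end Divergence

lemma integral_fderiv_apply_eq_zero {E F : Type*} [NormedAddCommGroup E] [NormedSpace ℝ E]
    [FiniteDimensional ℝ E] [MeasurableSpace E] [BorelSpace E] {μ : Measure E}
    [μ.IsAddHaarMeasure] [NormedAddCommGroup F] [NormedSpace ℝ F] {f : E → F}
    (hf : ContDiff ℝ 1 f) (hfc : HasCompactSupport f) (v : E) :
    ∫ x, fderiv ℝ f x v ∂μ = 0 := by
  have hf' : Integrable (fun x => fderiv ℝ f x v) μ :=
    ((hf.continuous_fderiv one_ne_zero).clm_apply continuous_const).integrable_of_hasCompactSupport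
      (hfc.fderiv_apply (𝕜 := ℝ) v)
  simpa using integral_bilinear_hasFDerivAt_right_eq_neg_left_of_integrable
    (μ := μ) (f := fun _ => (1 : ℝ)) (f' := fun _ => 0) (g := f) (g' := fderiv ℝ f) (v := v)
    (B := ContinuousLinearMap.lsmul ℝ ℝ) (by simp) (by simpa using hf')
    (by simpa using hf.continuous.integrable_of_hasCompactSupport hfc)
    (fun x _ => hasFDerivAt_const 1 x)
    (fun x _ => (hf.differentiable one_ne_zero x).hasFDerivAt)

lemma integral_diverg_eq_zero {ξ : Euc n → Euc n} (hξ : ContDiff ℝ 1 ξ)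
    (hξc : HasCompactSupport ξ) : ∫ x, diverg ξ x = 0 := by
  have hint (i : Fin n) : Integrable (fun x => fderiv ℝ ξ x (EuclideanSpace.single i 1)) :=
    ((hξ.continuous_fderiv one_ne_zero).clm_apply continuous_const).integrable_of_hasCompactSupport
      (hξc.fderiv_apply (𝕜 := ℝ) _)
  simp only [diverg]
  refine (integral_finsetSum _ fun i _ => ?_).trans (Finset.sum_eq_zero fun i _ => ?_)
  · exact (EuclideanSpace.proj (𝕜 := ℝ) i).integrable_comp (hint i)
  have := (EuclideanSpace.proj (𝕜 := ℝ) i).integral_comp_comm (hint i)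
  simpa [integral_fderiv_apply_eq_zero hξ hξc] using this

lemma zero_mem_testVF : (0 : Euc n → Euc n) ∈ testVF n :=
  ⟨contDiff_const, HasCompactSupport.zero, by simp⟩

lemma comp_add_right_mem_testVF {ζ : Euc n → Euc n} (hζ : ζ ∈ testVF n) (t : Euc n) :
    (fun y => ζ (y + t)) ∈ testVF n :=
  ⟨hζ.1.comp (contDiff_id.add contDiff_const), hζ.2.1.comp_homeomorph (Homeomorph.addRight t),
    fun _ => hζ.2.2 _⟩

lemma add_smul_sub_mem_testVF {ξ η : Euc n → Euc n} (hξ : ξ ∈ testVF n) (hη : η ∈ testVF n)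
    {w : Euc n → ℝ} (hw : ContDiff ℝ 1 w) (hw01 : ∀ x, w x ∈ Icc 0 1) :
    (fun x => η x + w x • (ξ x - η x)) ∈ testVF n := by
  refine ⟨hη.1.add (hw.smul (hξ.1.sub hη.1 :)),
    hη.2.1.add (HasCompactSupport.smul_left (f := w) (hξ.2.1.sub hη.2.1 :)), fun x => ?_⟩
  simpa using (convex_closedBall (0 : Euc n) 1).add_smul_sub_mem (by simpa using hη.2.2 x)
    (by simpa using hξ.2.2 x) (hw01 x)

lemma ofReal_integral_mul_diverg_le_totalVariation {u : Euc n → ℝ} {ξ : Euc n → Euc n}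
    (hξ : ξ ∈ testVF n) : ENNReal.ofReal (∫ x, u x * diverg ξ x) ≤ totalVariation u :=
  le_iSup₂ (f := fun ξ _ => ENNReal.ofReal (∫ x, u x * diverg ξ x)) ξ hξ

lemma integral_mul_diverg_le_toReal_totalVariation {u : Euc n → ℝ} {ξ : Euc n → Euc n}
    (hξ : ξ ∈ testVF n) (hu : totalVariation u ≠ ⊤) :
    ∫ x, u x * diverg ξ x ≤ (totalVariation u).toReal :=
  (ENNReal.ofReal_le_iff_le_toReal hu).1 (ofReal_integral_mul_diverg_le_totalVariation hξ)

lemma perimeter_eq_totalVariation {E : Set (Euc n)} (hE : MeasurableSet E) :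
    perimeter E = totalVariation (E.indicator 1) := by
  refine biSup_congr fun ξ _ => ?_
  rw [← integral_indicator hE]
  congr 2 with x
  by_cases hx : x ∈ E <;> simp [hx]

open scoped Convolution in
lemma totalVariation_convolution_le {ρ f : Euc n → ℝ} (hρ : Integrable ρ) (hρ0 : ∀ t, 0 ≤ ρ t)
    (hρ1 : ∫ t, ρ t = 1) (hf : Measurable f) {C : ℝ} (hfC : ∀ x, |f x| ≤ C) :
    totalVariation (ρ ⋆[ContinuousLinearMap.lsmul ℝ ℝ] f) ≤ totalVariation f := by
  rcases eq_or_ne (totalVariation f) ⊤ with hTV | hTV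
  · simp [hTV]
  refine iSup₂_le fun ζ hζ => ENNReal.ofReal_le_of_le_toReal ?_
  set a := (totalVariation f).toReal
  have htranslate (t : Euc n) : ∫ x, f (x - t) * diverg ζ x ≤ a := by
    rw [← integral_add_right_eq_self _ t]
    simpa [← diverg_comp_add_right] using
      integral_mul_diverg_le_toReal_totalVariation (comp_add_right_mem_testVF hζ t) hTV
  set F : Euc n → Euc n → ℝ := fun x t => f (x - t) * (diverg ζ x * ρ t)
  have hF : Integrable (Function.uncurry F) (volume.prod volume) :=
    ((integrable_diverg hζ.1 hζ.2.1).mul_prod hρ).bdd_mul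
      (hf.comp measurable_sub).aestronglyMeasurable (.of_forall fun p => hfC (p.1 - p.2))
  calc ∫ x, (ρ ⋆[ContinuousLinearMap.lsmul ℝ ℝ] f) x * diverg ζ x
      = ∫ x, ∫ t, F x t := by
        simp only [convolution_lsmul, smul_eq_mul, F, ← integral_mul_const]
        congr 1 with x
        congr 1 with t
        ring
    _ = ∫ t, (∫ x, f (x - t) * diverg ζ x) * ρ t := by
        rw [integral_integral_swap hF]
        simp only [F, ← mul_assoc, integral_mul_const]
    _ ≤ ∫ t, a * ρ t :=
        integral_mono (by simpa [F, ← mul_assoc, integral_mul_const] using hF.integral_prod_right)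
          (hρ.const_mul a) fun t => mul_le_mul_of_nonneg_right (htranslate t) (hρ0 t)
    _ = a := by rw [integral_const_mul, hρ1, mul_one]

lemma mul_diverg_add_mul_diverg {u v : Euc n → ℝ} {ξ η : Euc n → Euc n} {x : Euc n}
    (hu : Differentiable ℝ u) (hv : Differentiable ℝ v) (hξ : Differentiable ℝ ξ)
    (hη : Differentiable ℝ η) :
    u x * diverg (fun y => η y + v y • (ξ y - η y)) x
        + v x * diverg (fun y => η y + u y • (ξ y - η y)) x
      = u x * v x * diverg ξ x + (u x + v x - u x * v x) * diverg η x
        + diverg (fun y => u y • v y • (ξ y - η y)) x := by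
  have hθ : Differentiable ℝ fun y => ξ y - η y := hξ.sub hη
  have huθ : Differentiable ℝ fun y => u y • (ξ y - η y) := hu.smul hθ
  have hvθ : Differentiable ℝ fun y => v y • (ξ y - η y) := hv.smul hθ
  rw [diverg_fun_add (hη x) (hvθ x), diverg_fun_add (hη x) (huθ x),
    diverg_fun_smul (hv x) (hθ x), diverg_fun_smul (hu x) (hθ x),
    diverg_fun_smul (hu x) (hvθ x), diverg_fun_smul (hv x) (hθ x), diverg_fun_sub (hξ x) (hη x),
    map_smul, smul_eq_mul]
  ring

lemma ofReal_integral_mul_add_le_totalVariation_of_contDiff {u v : Euc n → ℝ} (hu : ContDiff ℝ 1 u)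
    (hv : ContDiff ℝ 1 v) (hu01 : ∀ x, u x ∈ Icc 0 1) (hv01 : ∀ x, v x ∈ Icc 0 1)
    {ξ η : Euc n → Euc n} (hξ : ξ ∈ testVF n) (hη : η ∈ testVF n) :
    ENNReal.ofReal ((∫ x, u x * v x * diverg ξ x) + ∫ x, (u x + v x - u x * v x) * diverg η x)
      ≤ totalVariation u + totalVariation v := by
  have hζ₁ := add_smul_sub_mem_testVF hξ hη hv hv01
  have hζ₂ := add_smul_sub_mem_testVF hξ hη hu hu01
  have hw : ContDiff ℝ 1 fun y => u y • v y • (ξ y - η y) := by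
    have := hξ.1; have := hη.1; fun_prop
  have hwc : HasCompactSupport fun y => u y • v y • (ξ y - η y) :=
    HasCompactSupport.smul_left (f := u) (HasCompactSupport.smul_left (f := v)
      (hξ.2.1.sub hη.2.1 :))
  have hcont : Continuous fun x => u x * v x := hu.continuous.mul hv.continuous
  have hcont' : Continuous fun x => u x + v x - u x * v x :=
    (hu.continuous.add hv.continuous).sub hcont
  have key : (∫ x, u x * v x * diverg ξ x) + ∫ x, (u x + v x - u x * v x) * diverg η x
      = (∫ x, u x * diverg (fun y => η y + v y • (ξ y - η y)) x)
        + ∫ x, v x * diverg (fun y => η y + u y • (ξ y - η y)) x := by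
    have hint : Integrable fun x => u x * v x * diverg ξ x + (u x + v x - u x * v x) * diverg η x :=
      (integrable_mul_diverg hcont hξ.1 hξ.2.1).add (integrable_mul_diverg hcont' hη.1 hη.2.1)
    rw [← integral_add (integrable_mul_diverg hcont hξ.1 hξ.2.1)
        (integrable_mul_diverg hcont' hη.1 hη.2.1),
      ← integral_add (integrable_mul_diverg hu.continuous hζ₁.1 hζ₁.2.1)
        (integrable_mul_diverg hv.continuous hζ₂.1 hζ₂.2.1)]
    simp only [mul_diverg_add_mul_diverg (hu.differentiable one_ne_zero)
      (hv.differentiable one_ne_zero) (hξ.1.differentiable one_ne_zero)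
      (hη.1.differentiable one_ne_zero)]
    rw [integral_add hint (integrable_diverg hw hwc), integral_diverg_eq_zero hw hwc, add_zero]
  rw [key]
  exact ENNReal.ofReal_add_le.trans (add_le_add
    (ofReal_integral_mul_diverg_le_totalVariation hζ₁)
    (ofReal_integral_mul_diverg_le_totalVariation hζ₂))

open scoped Convolution in
lemma convolution_mem_Icc {G : Type*} [Sub G] [MeasurableSpace G] {μ : Measure G}
    {ρ f : G → ℝ} (hρ : Integrable ρ μ) (hρ0 : ∀ t, 0 ≤ ρ t) (hρ1 : ∫ t, ρ t ∂μ = 1)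
    (hf01 : ∀ x, f x ∈ Icc 0 1) (x : G) :
    (ρ ⋆[ContinuousLinearMap.lsmul ℝ ℝ, μ] f) x ∈ Icc 0 1 := by
  simp only [convolution_lsmul, smul_eq_mul]
  refine ⟨integral_nonneg fun t => mul_nonneg (hρ0 t) (hf01 _).1, ?_⟩
  calc ∫ t, ρ t * f (x - t) ∂μ ≤ ∫ t, ρ t ∂μ :=
        integral_mono_of_nonneg (.of_forall fun t => mul_nonneg (hρ0 t) (hf01 _).1) hρ
          (.of_forall fun t => mul_le_of_le_one_right (hρ0 t) (hf01 _).2)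
    _ = 1 := hρ1

open scoped Convolution in
lemma exists_seq_contDiff_tendsto_ae {f : Euc n → ℝ} (hf : Measurable f)
    (hf01 : ∀ x, f x ∈ Icc 0 1) :
    ∃ u : ℕ → Euc n → ℝ, (∀ k, ContDiff ℝ 1 (u k)) ∧ (∀ k x, u k x ∈ Icc 0 1) ∧
      (∀ k, totalVariation (u k) ≤ totalVariation f) ∧
      ∀ᵐ x, Tendsto (fun k => u k x) atTop (𝓝 (f x)) := by
  let φ : ℕ → ContDiffBump (0 : Euc n) := fun k =>
    ⟨1 / (k + 1), 2 * (1 / (k + 1)), by positivity,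
      by linarith [show 0 < 1 / ((k : ℝ) + 1) by positivity]⟩
  have hφ : Tendsto (fun k => (φ k).rOut) atTop (𝓝 0) := by
    simpa [φ] using tendsto_one_div_add_atTop_nhds_zero_nat.const_mul (2 : ℝ)
  have hf_abs (x : Euc n) : |f x| ≤ 1 := abs_le.2 ⟨by linarith [(hf01 x).1], (hf01 x).2⟩
  have hf_loc : LocallyIntegrable f :=
    (locallyIntegrable_const (1 : ℝ)).mono hf.aestronglyMeasurable
      (.of_forall fun x => by simpa using hf_abs x)
  refine ⟨fun k => (φ k).normed volume ⋆[ContinuousLinearMap.lsmul ℝ ℝ] f, fun k => ?_,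
    fun k => convolution_mem_Icc (φ k).integrable_normed (φ k).nonneg_normed
      (φ k).integral_normed hf01,
    fun k => totalVariation_convolution_le (φ k).integrable_normed (φ k).nonneg_normed
      (φ k).integral_normed hf hf_abs,
    ContDiffBump.ae_convolution_tendsto_right_of_locallyIntegrable hφ (K := 2)
      (.of_forall fun k => le_rfl) hf_loc⟩
  exact (φ k).hasCompactSupport_normed.contDiff_convolution_left _ (φ k).contDiff_normed hf_loc

lemma tendsto_integral_mul_diverg {h : ℕ → Euc n → ℝ} {h₀ : Euc n → ℝ}
    (hmeas : ∀ k, AEStronglyMeasurable (h k)) (hbdd : ∀ k x, |h k x| ≤ 1)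
    (hlim : ∀ᵐ x, Tendsto (fun k => h k x) atTop (𝓝 (h₀ x))) {ξ : Euc n → Euc n}
    (hξ : ContDiff ℝ 1 ξ) (hξc : HasCompactSupport ξ) :
    Tendsto (fun k => ∫ x, h k x * diverg ξ x) atTop (𝓝 (∫ x, h₀ x * diverg ξ x)) :=
  tendsto_integral_of_dominated_convergence (fun x => |diverg ξ x|)
    (fun k => (hmeas k).mul (continuous_diverg hξ).aestronglyMeasurable)
    (integrable_diverg hξ hξc).abs
    (fun k => .of_forall fun x => by
      rw [norm_mul]; exact mul_le_of_le_one_left (abs_nonneg _) (hbdd k x))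
    (hlim.mono fun _ hx => hx.mul_const _)

lemma ofReal_integral_mul_add_le_totalVariation {f g : Euc n → ℝ} (hf : Measurable f)
    (hg : Measurable g) (hf01 : ∀ x, f x ∈ Icc 0 1) (hg01 : ∀ x, g x ∈ Icc 0 1)
    {ξ η : Euc n → Euc n} (hξ : ξ ∈ testVF n) (hη : η ∈ testVF n) :
    ENNReal.ofReal ((∫ x, f x * g x * diverg ξ x) + ∫ x, (f x + g x - f x * g x) * diverg η x)
      ≤ totalVariation f + totalVariation g := by
  obtain ⟨u, hu, hu01, huTV, hu_lim⟩ := exists_seq_contDiff_tendsto_ae hf hf01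
  obtain ⟨v, hv, hv01, hvTV, hv_lim⟩ := exists_seq_contDiff_tendsto_ae hg hg01
  have hbdd (k : ℕ) (x : Euc n) :
      |u k x * v k x| ≤ 1 ∧ |u k x + v k x - u k x * v k x| ≤ 1 := by
    obtain ⟨⟨hu0, hu1⟩, ⟨hv0, hv1⟩⟩ := And.intro (hu01 k x) (hv01 k x)
    exact ⟨abs_le.2 ⟨by nlinarith, by nlinarith⟩, abs_le.2 ⟨by nlinarith, by nlinarith⟩⟩
  have hlim := (ENNReal.continuous_ofReal.tendsto _).comp <|
    (tendsto_integral_mul_diverg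
      (fun k => ((hu k).continuous.mul (hv k).continuous).aestronglyMeasurable)
      (fun k x => (hbdd k x).1)
      (by filter_upwards [hu_lim, hv_lim] with x hux hvx using hux.mul hvx) hξ.1 hξ.2.1).add
    (tendsto_integral_mul_diverg
      (fun k => (((hu k).continuous.add (hv k).continuous).sub
        ((hu k).continuous.mul (hv k).continuous)).aestronglyMeasurable)
      (fun k x => (hbdd k x).2)
      (by filter_upwards [hu_lim, hv_lim] with x hux hvx using (hux.add hvx).sub (hux.mul hvx))
      hη.1 hη.2.1)
  exact le_of_tendsto' hlim fun k =>
    (ofReal_integral_mul_add_le_totalVariation_of_contDiff (hu k) (hv k) (hu01 k) (hv01 k)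
      hξ hη).trans (add_le_add (huTV k) (hvTV k))

lemma ENNReal.ofReal_add_ofReal_le {a b : ℝ} {c : ℝ≥0∞} (hab : ENNReal.ofReal (a + b) ≤ c)
    (ha : ENNReal.ofReal a ≤ c) (hb : ENNReal.ofReal b ≤ c) :
    ENNReal.ofReal a + ENNReal.ofReal b ≤ c := by
  rcases le_total a 0 with ha0 | ha0
  · simpa [ENNReal.ofReal_of_nonpos ha0] using hb
  rcases le_total b 0 with hb0 | hb0
  · simpa [ENNReal.ofReal_of_nonpos hb0] using ha
  rwa [← ENNReal.ofReal_add ha0 hb0]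

lemma totalVariation_mul_add_le {f g : Euc n → ℝ} (hf : Measurable f) (hg : Measurable g)
    (hf01 : ∀ x, f x ∈ Icc 0 1) (hg01 : ∀ x, g x ∈ Icc 0 1) :
    totalVariation (f * g) + totalVariation (f + g - f * g)
      ≤ totalVariation f + totalVariation g := by
  have key {ξ η : Euc n → Euc n} (hξ : ξ ∈ testVF n) (hη : η ∈ testVF n) :=
    ofReal_integral_mul_add_le_totalVariation hf hg hf01 hg01 hξ hη
  refine ENNReal.biSup_add_biSup_le ⟨0, zero_mem_testVF⟩ ⟨0, zero_mem_testVF⟩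
    fun ξ hξ η hη => ENNReal.ofReal_add_ofReal_le (key hξ hη) ?_ ?_
  · simpa [diverg] using key hξ zero_mem_testVF
  · simpa [diverg] using key zero_mem_testVF hη

lemma perimeter_inter_add_perimeter_union_le {E G : Set (Euc n)} (hE : MeasurableSet E)
    (hG : MeasurableSet G) :
    perimeter (E ∩ G) + perimeter (E ∪ G) ≤ perimeter E + perimeter G := by
  have hunion : (E ∪ G).indicator (1 : Euc n → ℝ)
      = E.indicator 1 + G.indicator 1 - E.indicator 1 * G.indicator 1 := by
    ext x
    by_cases hxE : x ∈ E <;> by_cases hxG : x ∈ G <;> simp [hxE, hxG]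
  have hmem (S : Set (Euc n)) (x : Euc n) : S.indicator (1 : Euc n → ℝ) x ∈ Icc 0 1 := by
    by_cases hx : x ∈ S <;> simp [hx]
  rw [perimeter_eq_totalVariation hE, perimeter_eq_totalVariation hG,
    perimeter_eq_totalVariation (hE.inter hG), perimeter_eq_totalVariation (hE.union hG),
    inter_indicator_one, hunion]
  exact totalVariation_mul_add_le (measurable_one.indicator hE) (measurable_one.indicator hG)
    (hmem E) (hmem G)

theorem outwardMinimizing_iff_general (Ω E : Set (Euc n))
    (hE : MeasurableSet E) (hEΩ : E ⊆ Ω) (hEfin : perimeter E < ⊤) :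
    OutwardMinimizing Ω E ↔
      ∀ G : Set (Euc n), MeasurableSet G → G ⊆ Ω → perimeter G < ⊤ →
        perimeter (E ∩ G) ≤ perimeter G := by
  refine ⟨fun hmin G hG hGΩ hGfin => ?_, fun h F hF hEF hFΩ => ?_⟩
  · have hsub := perimeter_inter_add_perimeter_union_le hE hG
    have hunion_fin : perimeter (E ∪ G) ≠ ⊤ :=
      ne_top_of_le_ne_top (ENNReal.add_lt_top.2 ⟨hEfin, hGfin⟩).ne (le_add_self.trans hsub)
    refine ENNReal.le_of_add_le_add_right hunion_fin (hsub.trans ?_)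
    rw [add_comm]
    exact add_le_add_right (hmin _ (hE.union hG) subset_union_left (union_subset hEΩ hGΩ)) _
  · obtain hFtop | hFfin := eq_top_or_lt_top (perimeter F)
    · simp [hFtop]
    · simpa [inter_eq_left.2 hEF] using h F hF hFΩ hFfin

/-- `E` is outward minimizing in the open set `Ω` if and only if
`P(E ∩ G) ≤ P(G)` for all sets of finite perimeter `G ⊆ Ω`. -/
theorem outwardMinimizing_iff (Ω E : Set (Euc n)) (hΩ : IsOpen Ω)
    (hE : MeasurableSet E) (hEΩ : E ⊆ Ω) (hEfin : perimeter E < ⊤) :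
    OutwardMinimizing Ω E ↔
      ∀ G : Set (Euc n), MeasurableSet G → G ⊆ Ω → perimeter G < ⊤ →
        perimeter (E ∩ G) ≤ perimeter G :=
  outwardMinimizing_iff_general Ω E hE hEΩ hEfin

end
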